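/- Let λ ∈ ℂ∖{0} and let w be a complex square root of λ (w² = λ). Then sin((w + w⁻¹)/4) = 0 if and only if there exists k ∈ ℤ with λ = λ_{k,0}. Moreover, for every k ∈ ℤ and every complex square root w of λ_{k,0}, one has cos((w + w⁻¹)/4) = (−1)^k. (Thus the zeros of the vacuum monodromy entry c₀(λ) = w·sin((w+w⁻¹)/4), equivalently of Δ₀² − 4 with Δ₀(λ) = 2·cos((w+w⁻¹)/4), are exactly the points λ_{k,0}, and the values of the vacuum spectral divisor are μ_{k,0} = a₀(λ_{k,0}) = (−1)^k.) -/

import Mathlib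

/-! Put `c = w + w⁻¹`. Then `sin (c / 4) = 0` exactly when `c = 4πn`, i.e. when `w` is a root of
`z² - 4πn z + 1`, whose roots are `r` and `r⁻¹` with `r = 2πn + √(4π²n² - 1)` (or `r = i` for
`n = 0`). Since `r² = λ_{n,0}` and `r⁻² = λ_{-n,0}`, these `w` are exactly the square roots of the
points `λ_{k,0}`. Conversely a square root of `λ_{k,0}` is `±r`, so `c = ±4πk` and
`cos (c / 4) = cos (±πk) = (-1)^k`. -/

open Complex

noncomputable section

/-- The lambda-coordinates `λ_{k,0}` of the vacuum spectral divisor. -/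
noncomputable def lam0 (k : ℤ) : ℝ :=
  8 * Real.pi ^ 2 * (k : ℝ) ^ 2 + 4 * Real.pi * (k : ℝ) * Real.sqrt (4 * Real.pi ^ 2 * (k : ℝ) ^ 2 - 1) - 1

open scoped Real

theorem add_inv_eq_add_inv_iff {K : Type*} [Field K] {w r : K} (hw : w ≠ 0) (hr : r ≠ 0) :
    w + w⁻¹ = r + r⁻¹ ↔ w = r ∨ w = r⁻¹ := by
  refine ⟨fun h => ?_, ?_⟩
  · have hfactor : (w - r) * (w * r - 1) = 0 := by
      field_simp at h
      linear_combination h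
    rcases mul_eq_zero.mp hfactor with h | h
    · exact .inl (sub_eq_zero.mp h)
    · exact .inr (eq_inv_of_mul_eq_one_left (sub_eq_zero.mp h))
  · rintro (rfl | rfl) <;> simp [add_comm]

theorem Complex.cos_int_mul_pi (n : ℤ) : cos (n * π) = (-1 : ℂ) ^ n := by
  rw [← ofReal_intCast, ← ofReal_mul, ← ofReal_cos, Real.cos_int_mul_pi, ofReal_zpow, ofReal_neg,
    ofReal_one]

theorem sin_div_four_eq_zero_iff {z : ℂ} : sin (z / 4) = 0 ↔ ∃ n : ℤ, z = 4 * π * n := by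
  rw [sin_eq_zero_iff]
  refine exists_congr fun n => ?_
  constructor <;> intro h
  · linear_combination 4 * h
  · linear_combination h / 4

theorem one_le_four_mul_pi_sq_mul_sq {k : ℤ} (hk : k ≠ 0) : 1 ≤ 4 * π ^ 2 * (k : ℝ) ^ 2 := by
  have hk1 : (1 : ℝ) ≤ (k : ℝ) ^ 2 := by
    rw [one_le_sq_iff_one_le_abs]; exact_mod_cast Int.one_le_abs hk
  nlinarith [Real.pi_gt_three]

theorem lam0_zero : lam0 0 = -1 := by
  simp [lam0]

theorem lam0_neg_mul_lam0 (k : ℤ) : lam0 (-k) * lam0 k = 1 := by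
  rcases eq_or_ne k 0 with rfl | hk
  · norm_num [lam0_zero]
  have hs := Real.sq_sqrt (sub_nonneg.mpr (one_le_four_mul_pi_sq_mul_sq hk))
  simp only [lam0, Int.cast_neg, neg_sq]
  linear_combination (-16 * π ^ 2 * (k : ℝ) ^ 2) * hs

theorem lam0_ne_zero (k : ℤ) : lam0 k ≠ 0 :=
  right_ne_zero_of_mul_eq_one (lam0_neg_mul_lam0 k)

theorem exists_sq_eq_lam0_and_add_inv_eq (k : ℤ) :
    ∃ r : ℂ, r ^ 2 = lam0 k ∧ r + r⁻¹ = 4 * π * k := by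
  rcases eq_or_ne k 0 with rfl | hk
  · exact ⟨I, by simp [lam0_zero], by simp⟩
  set s := √(4 * π ^ 2 * (k : ℝ) ^ 2 - 1)
  have hs : (s : ℂ) ^ 2 = 4 * π ^ 2 * k ^ 2 - 1 := by
    rw [← ofReal_pow, Real.sq_sqrt (sub_nonneg.mpr (one_le_four_mul_pi_sq_mul_sq hk))]
    norm_cast
  have hinv : (2 * π * k + s : ℂ)⁻¹ = 2 * π * k - s :=
    inv_eq_of_mul_eq_one_right (by linear_combination -hs)
  refine ⟨2 * π * k + s, ?_, by rw [hinv]; ring⟩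
  simp only [lam0]
  push_cast
  linear_combination hs

theorem add_inv_eq_or_of_sq_eq_lam0 {k : ℤ} {w : ℂ} (hw : w ^ 2 = lam0 k) :
    w + w⁻¹ = 4 * π * k ∨ w + w⁻¹ = -(4 * π * k) := by
  obtain ⟨r, hr, hrk⟩ := exists_sq_eq_lam0_and_add_inv_eq k
  rcases sq_eq_sq_iff_eq_or_eq_neg.mp (hw.trans hr.symm) with rfl | rfl
  · exact .inl hrk
  · exact .inr (by rw [inv_neg, ← neg_add, hrk])

theorem exists_add_inv_eq_iff_exists_sq_eq_lam0 {w : ℂ} (hw : w ≠ 0) :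
    (∃ n : ℤ, w + w⁻¹ = 4 * π * n) ↔ ∃ k : ℤ, w ^ 2 = lam0 k := by
  constructor
  · rintro ⟨n, hn⟩
    obtain ⟨r, hr, hrn⟩ := exists_sq_eq_lam0_and_add_inv_eq n
    have hr0 : r ≠ 0 := by
      rintro rfl
      simp [eq_comm, lam0_ne_zero] at hr
    rcases (add_inv_eq_add_inv_iff hw hr0).mp (hn.trans hrn.symm) with rfl | rfl
    · exact ⟨n, hr⟩
    · refine ⟨-n, ?_⟩
      rw [inv_pow, hr, eq_inv_of_mul_eq_one_left (lam0_neg_mul_lam0 n), ofReal_inv]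
  · rintro ⟨k, hk⟩
    rcases add_inv_eq_or_of_sq_eq_lam0 hk with h | h
    · exact ⟨k, h⟩
    · exact ⟨-k, by rw [h]; push_cast; ring⟩

/-- For `λ ≠ 0` and a square root `w` of `λ`, `sin((w+w⁻¹)/4) = 0` if and only
if `λ = λ_{k,0}` for some `k ∈ ℤ`; and for every `k ∈ ℤ` and every square root `w` of `λ_{k,0}`,
`cos((w+w⁻¹)/4) = (−1)^k`. -/
theorem vacuum_divisor_characterization :
    (∀ lam w : ℂ, lam ≠ 0 → w ^ 2 = lam →
      (Complex.sin ((w + w⁻¹) / 4) = 0 ↔ ∃ k : ℤ, lam = (lam0 k : ℂ))) ∧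
    (∀ k : ℤ, ∀ w : ℂ, w ^ 2 = (lam0 k : ℂ) →
      Complex.cos ((w + w⁻¹) / 4) = (-1 : ℂ) ^ k) := by
  refine ⟨fun lam w hlam hw => ?_, fun k w hw => ?_⟩
  · have hw0 : w ≠ 0 := by rintro rfl; exact hlam (by simp [← hw])
    rw [sin_div_four_eq_zero_iff, exists_add_inv_eq_iff_exists_sq_eq_lam0 hw0, hw]
  · have hk : (4 * π * k : ℂ) / 4 = k * π := by ring
    rcases add_inv_eq_or_of_sq_eq_lam0 hw with h | h
    · rw [h, hk, cos_int_mul_pi]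
    · rw [h, neg_div, hk, cos_neg, cos_int_mul_pi]

end
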